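/- Let d_j, μ_j > 0, v_j ∈ ℝ, and define the (asymmetric) kernel K(s,w) := μ_j·e^{−(w + v_j s)²/(4 d_j s) − μ_j s}/(2·√(π d_j s)) for s > 0, w ∈ ℝ. Then for every c ∈ ℝ and every z ∈ ℝ with μ_j + (c − v_j)z − d_j z² > 0, one has ∫₀^∞∫_ℝ K(s,w)·e^{−z(cs+w)} dw ds = μ_j/(μ_j + (c − v_j)z − d_j z²); consequently, for p > μ_a > 0 the characteristic function χ(z,c) := z² − cz − μ_a + p·∫₀^∞∫_ℝ K(s,w)·e^{−z(cs+w)} dw ds equals z² − cz − μ_a + p·μ_j/(μ_j + (c − v_j)z − d_j z²), and this function of z is strictly convex (has everywhere positive second derivative) on the set of z ≥ 0 where μ_j + (c − v_j)z − d_j z² > 0. -/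

import Mathlib

/-!
For fixed `s > 0`, the kernel `K(s, ·)` is `μj e^{-μj s}` times the density of the Gaussian
`N(-vj s, 2 dj s)`, so the inner integral is that Gaussian's moment generating function at
`-z`, which gives `μj e^{-λ s}` with `λ = μj + (c - vj) z - dj z²`; the outer integral is then
`μj / λ`.
For the concave quadratic `q = a + b y - d y²` one has `(A / q)'' = 2A (q'² + d q) / q³`,
which is positive wherever `q > 0`, as soon as `A, d > 0`.
-/

open MeasureTheory Filter Set

noncomputable section

/-- The asymmetric kernel of the marine population model. -/
def Kmarine (dj vj μj : ℝ) (s w : ℝ) : ℝ :=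
  μj * Real.exp (-(w + vj * s) ^ 2 / (4 * dj * s) - μj * s) / (2 * Real.sqrt (Real.pi * dj * s))

open ProbabilityTheory Real Topology
open scoped NNReal

theorem integral_gaussianPDFReal_mul_exp (m : ℝ) {v : ℝ≥0} (hv : v ≠ 0) (t : ℝ) :
    ∫ x, gaussianPDFReal m v x * exp (t * x) = exp (m * t + v * t ^ 2 / 2) := by
  have h := congrFun (mgf_id_gaussianReal (μ := m) (v := v)) t
  rwa [mgf, integral_gaussianReal_eq_integral_smul hv] at h

theorem Kmarine_eq_mul_gaussianPDFReal {dj s : ℝ} (vj μj w : ℝ) (h : 0 ≤ dj * s) :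
    Kmarine dj vj μj s w
      = μj * exp (-(μj * s)) * gaussianPDFReal (-(vj * s)) (2 * dj * s).toNNReal w := by
  have hsqrt : √(2 * π * (2 * dj * s)) = 2 * √(π * dj * s) := by
    rw [show 2 * π * (2 * dj * s) = 2 ^ 2 * (π * dj * s) by ring,
      sqrt_mul (by norm_num), sqrt_sq zero_le_two]
  rw [Kmarine, gaussianPDFReal, Real.coe_toNNReal _ (by linarith), hsqrt,
    sub_eq_add_neg _ (μj * s), exp_add, sub_neg_eq_add]
  field_simp
  ring_nf

theorem integral_Kmarine_mul_exp {dj s : ℝ} (hdj : 0 < dj) (hs : 0 < s) (vj μj c z : ℝ) :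
    ∫ w, Kmarine dj vj μj s w * exp (-z * (c * s + w))
      = μj * exp (-(μj + (c - vj) * z - dj * z ^ 2) * s) := by
  have hv : (2 * dj * s).toNNReal ≠ 0 := (Real.toNNReal_pos.mpr (by positivity)).ne'
  have hexp (w : ℝ) : exp (-z * (c * s + w)) = exp (-(z * c * s)) * exp (-z * w) := by
    rw [← exp_add]
    congr 1
    ring
  simp_rw [Kmarine_eq_mul_gaussianPDFReal vj μj _ (mul_pos hdj hs).le, hexp, mul_mul_mul_comm,
    integral_const_mul, integral_gaussianPDFReal_mul_exp _ hv,
    mul_assoc, ← exp_add]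
  rw [Real.coe_toNNReal _ (by positivity)]
  ring_nf

theorem integral_Kmarine_moment {dj : ℝ} (hdj : 0 < dj) (vj μj c z : ℝ)
    (hq : 0 < μj + (c - vj) * z - dj * z ^ 2) :
    ∫ s in Ioi (0:ℝ), ∫ w, Kmarine dj vj μj s w * exp (-z * (c * s + w))
      = μj / (μj + (c - vj) * z - dj * z ^ 2) := by
  rw [setIntegral_congr_fun measurableSet_Ioi
      fun s hs => integral_Kmarine_mul_exp hdj hs vj μj c z, integral_const_mul, integral_exp_mul_Ioi (neg_lt_zero.mpr hq)]
  field_simp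
  simp

theorem deriv_deriv_eq_of_eventually_hasDerivAt {f f' : ℝ → ℝ} {f'' z : ℝ}
    (hf : ∀ᶠ y in 𝓝 z, HasDerivAt f (f' y) y) (hf' : HasDerivAt f' f'' z) :
    deriv (deriv f) z = f'' :=
  (EventuallyEq.deriv_eq (hf.mono fun _ hy => hy.deriv)).trans hf'.deriv

section QuadraticDenominator

variable (a b d A : ℝ)

theorem hasDerivAt_quadratic (y : ℝ) :
    HasDerivAt (fun y => a + b * y - d * y ^ 2) (b - 2 * d * y) y := by
  refine (((hasDerivAt_id y).const_mul b).const_add a |>.sub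
    ((hasDerivAt_pow 2 y).const_mul d)).congr_deriv (by ring)

theorem hasDerivAt_div_quadratic {y : ℝ} (hy : a + b * y - d * y ^ 2 ≠ 0) :
    HasDerivAt (fun y => A / (a + b * y - d * y ^ 2))
      (-(A * (b - 2 * d * y)) / (a + b * y - d * y ^ 2) ^ 2) y :=
  ((hasDerivAt_const y A).div (hasDerivAt_quadratic a b d y) hy).congr_deriv (by ring)

theorem hasDerivAt_deriv_div_quadratic {z : ℝ} (hz : a + b * z - d * z ^ 2 ≠ 0) :
    HasDerivAt (fun y => -(A * (b - 2 * d * y)) / (a + b * y - d * y ^ 2) ^ 2)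
      (2 * A * ((b - 2 * d * z) ^ 2 + d * (a + b * z - d * z ^ 2)) / (a + b * z - d * z ^ 2) ^ 3)
      z := by
  have hnum : HasDerivAt (fun y => -(A * (b - 2 * d * y))) (2 * d * A) z :=
    (((hasDerivAt_id z).const_mul (2 * d)).const_sub b |>.const_mul A |>.neg).congr_deriv (by ring)
  refine (hnum.div ((hasDerivAt_quadratic a b d z).pow 2) (pow_ne_zero 2 hz)).congr_deriv ?_
  simp only [Pi.pow_apply]
  field_simp
  ring

theorem deriv_deriv_add_div_quadratic (c e : ℝ) {z : ℝ} (hz : a + b * z - d * z ^ 2 ≠ 0) :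
    deriv (deriv fun y => y ^ 2 - c * y - e + A / (a + b * y - d * y ^ 2)) z
      = 2 + 2 * A * ((b - 2 * d * z) ^ 2 + d * (a + b * z - d * z ^ 2))
        / (a + b * z - d * z ^ 2) ^ 3 := by
  have hpoly : ∀ y : ℝ, HasDerivAt (fun y => y ^ 2 - c * y - e) (2 * y - c) y := fun y =>
    ((hasDerivAt_pow 2 y).sub ((hasDerivAt_id y).const_mul c) |>.sub_const e).congr_deriv
      (by simp)
  have hne : ∀ᶠ y in 𝓝 z, a + b * y - d * y ^ 2 ≠ 0 :=
    (continuous_const.add (continuous_const.mul continuous_id) |>.sub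
      (continuous_const.mul (continuous_pow 2))).continuousAt.eventually_ne hz
  refine deriv_deriv_eq_of_eventually_hasDerivAt
    (hne.mono fun y hy => (hpoly y).add (hasDerivAt_div_quadratic a b d A hy)) ?_
  exact (((hasDerivAt_id z).const_mul 2).sub_const c).add
    (hasDerivAt_deriv_div_quadratic a b d A hz) |>.congr_deriv (by simp)

end QuadraticDenominator

/-- Computation of the exponential moment of the marine kernel, the resulting explicit form of
the characteristic function, and its strict convexity in `z`. -/
theorem marine_kernel_moment
    (dj vj μj μa p : ℝ)
    (hdj : 0 < dj) (hμj : 0 < μj) (hμa : 0 < μa) (hp : μa < p) :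
    -- the exponential moment
    (∀ c z : ℝ, 0 < μj + (c - vj) * z - dj * z ^ 2 →
      (∫ s in Set.Ioi (0:ℝ), ∫ w : ℝ, Kmarine dj vj μj s w * Real.exp (-z * (c * s + w)))
        = μj / (μj + (c - vj) * z - dj * z ^ 2)) ∧
    -- consequently, the explicit form of the characteristic function
    (∀ c z : ℝ, 0 < μj + (c - vj) * z - dj * z ^ 2 →
      z ^ 2 - c * z - μa +
          p * (∫ s in Set.Ioi (0:ℝ), ∫ w : ℝ,
            Kmarine dj vj μj s w * Real.exp (-z * (c * s + w)))
        = z ^ 2 - c * z - μa + p * μj / (μj + (c - vj) * z - dj * z ^ 2)) ∧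
    -- strict convexity: positive second derivative where the denominator is positive
    (∀ c z : ℝ, 0 ≤ z → 0 < μj + (c - vj) * z - dj * z ^ 2 →
      0 < deriv (deriv (fun y : ℝ =>
        y ^ 2 - c * y - μa + p * μj / (μj + (c - vj) * y - dj * y ^ 2))) z) := by
  have hmoment := integral_Kmarine_moment hdj vj μj
  refine ⟨hmoment, fun c z hq => by rw [hmoment c z hq, mul_div_assoc], fun c z _ hq => ?_⟩
  rw [deriv_deriv_add_div_quadratic μj (c - vj) dj (p * μj) c μa hq.ne']
  have hA : 0 < p * μj := mul_pos (hμa.trans hp) hμj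
  positivity
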